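/- arXiv:1702.07941 — 3 statements merged into one kernel-verified Lean document; each statement's English description precedes it below -/
import Mathlib

section
/- For each n ∈ ℕ let M_n = {F : F a nonempty finite subset of ℕ with min F = n}. Then the sets M_n, n ∈ ℕ, partition the support of F_ω^♭, and for each n the subballean of F_ω^♭ with support M_n is asymorphic to the Cantor macrocube Q_ω: there is a bijection h : M_n → {finite subsets of ℕ} such that for every finite H ⊆ ℕ there is a finite H' ⊆ ℕ with h(B^♭(F,H) ∩ M_n) ⊆ {L : L Δ h(F) ⊆ H'} for all F ∈ M_n, and conversely h⁻¹({L : L Δ h(F) ⊆ H}) ⊆ B^♭(F,H') ∩ M_n for all F ∈ M_n. -/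
/-- The ball `B_F(H,F)` of the ballean `F_ω` around a set `H`:
`B_F(H,F) = H ∪ F` if `H ∩ F ≠ ∅` and `B_F(H,F) = H` otherwise. -/
def BFset (H F : Finset ℕ) : Finset ℕ :=
  if (H ∩ F).Nonempty then H ∪ F else H

/-- The ball `B^♭(H,F)` of the hyperballean `F_ω^♭`:
all nonempty finite `Z` with `Z ⊆ B_F(H,F)` and `H ⊆ B_F(Z,F)`. -/
def hyperballF (H F : Finset ℕ) : Set (Finset ℕ) :=
  {Z | Z.Nonempty ∧ Z ⊆ BFset H F ∧ H ⊆ BFset Z F}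

/-- `M n` is the set of nonempty finite subsets of `ℕ` with minimum `n`. -/
def MM (n : ℕ) : Set (Finset ℕ) := {F | F.min = (n : WithTop ℕ)}

lemma mem_of_MM {n : ℕ} {F : Finset ℕ} (h : F ∈ MM n) : n ∈ F :=
  Finset.mem_of_min h

lemma le_of_MM {n : ℕ} {F : Finset ℕ} (h : F ∈ MM n) {x : ℕ} (hx : x ∈ F) : n ≤ x := by
  have h2 := Finset.min_le hx
  rw [h] at h2
  exact WithTop.coe_le_coe.1 h2

lemma MM_of {n : ℕ} {F : Finset ℕ} (h1 : n ∈ F) (h2 : ∀ x ∈ F, n ≤ x) : F ∈ MM n :=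
  le_antisymm (Finset.min_le h1) (Finset.le_min fun b hb => WithTop.coe_le_coe.2 (h2 b hb))

/-- The asymorphism on `M n`. -/
def hmap (n : ℕ) (F : Finset ℕ) : Finset ℕ := (F.erase n).image (fun x => x - (n+1))

lemma mem_hmap {n : ℕ} {F : Finset ℕ} (hF : F ∈ MM n) {x : ℕ} :
    x ∈ hmap n F ↔ x + (n+1) ∈ F := by
  simp only [hmap, Finset.mem_image, Finset.mem_erase]
  constructor
  · rintro ⟨y, ⟨hy1, hy2⟩, rfl⟩
    have hle := le_of_MM hF hy2
    have hy : y - (n+1) + (n+1) = y := by omega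
    rwa [hy]
  · intro hx
    exact ⟨x + (n+1), ⟨by omega, hx⟩, by omega⟩

lemma BFset_subset (H F : Finset ℕ) : BFset H F ⊆ H ∪ F := by
  unfold BFset
  split
  · exact fun _ h => h
  · exact Finset.subset_union_left

lemma BFset_eq {H F : Finset ℕ} {a : ℕ} (ha : a ∈ H) (ha' : a ∈ F) :
    BFset H F = H ∪ F := by
  unfold BFset
  rw [if_pos ⟨a, Finset.mem_inter.2 ⟨ha, ha'⟩⟩]

/-- Theorem 2(iii), first part: the sets `M_n` partition the support of
`F_ω^♭`, and each subballean on `M_n` is asymorphic to the Cantor macrocube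
`Q_ω` (encoded as the finite subsets of `ℕ` with balls given by symmetric
difference). -/
theorem Mn_partition_and_asymorphic_to_macrocube :
    (∀ F : Finset ℕ, F.Nonempty → ∃! n : ℕ, F ∈ MM n) ∧
    ∀ n : ℕ, ∃ h : Finset ℕ → Finset ℕ,
      Set.BijOn h (MM n) Set.univ ∧
      ∀ H : Finset ℕ, ∃ H' : Finset ℕ,
        (∀ F ∈ MM n, ∀ F' ∈ MM n,
          F' ∈ hyperballF F H → symmDiff (h F') (h F) ⊆ H') ∧
        (∀ F ∈ MM n, ∀ F' ∈ MM n,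
          symmDiff (h F') (h F) ⊆ H → F' ∈ hyperballF F H') := by
  constructor
  · intro F hF
    refine ⟨F.min' hF, ?_, ?_⟩
    · exact (Finset.coe_min' hF).symm
    · intro m hm
      have h1 : ((m : ℕ) : WithTop ℕ) = ((F.min' hF : ℕ) : WithTop ℕ) := by
        rw [← hm]
        exact (Finset.coe_min' hF).symm
      exact WithTop.coe_inj.1 h1
  · intro n
    refine ⟨hmap n, ⟨?_, ?_, ?_⟩, ?_⟩
    · intro F _; trivial
    · -- injective on MM n
      intro F hF F' hF' heq
      ext y
      rcases eq_or_ne y n with rfl | hy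
      · simp [mem_of_MM hF, mem_of_MM hF']
      · constructor
        · intro hyF
          have hle := le_of_MM hF hyF
          have h1 : y - (n+1) ∈ hmap n F := (mem_hmap hF).2 (by
            have : y - (n+1) + (n+1) = y := by omega
            rwa [this])
          rw [heq] at h1
          have := (mem_hmap hF').1 h1
          have hy2 : y - (n+1) + (n+1) = y := by omega
          rwa [hy2] at this
        · intro hyF
          have hle := le_of_MM hF' hyF
          have h1 : y - (n+1) ∈ hmap n F' := (mem_hmap hF').2 (by
            have : y - (n+1) + (n+1) = y := by omega
            rwa [this])
          rw [← heq] at h1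
          have := (mem_hmap hF).1 h1
          have hy2 : y - (n+1) + (n+1) = y := by omega
          rwa [hy2] at this
    · -- surjective onto univ
      intro L _
      set F : Finset ℕ := insert n (L.image (fun x => x + (n+1))) with hFdef
      have hmem : n ∈ F := Finset.mem_insert_self _ _
      have hF : F ∈ MM n := by
        apply MM_of hmem
        intro x hx
        rcases Finset.mem_insert.1 hx with rfl | hx
        · omega
        · obtain ⟨z, _, rfl⟩ := Finset.mem_image.1 hx
          omega
      refine ⟨F, hF, ?_⟩
      ext x
      rw [mem_hmap hF]
      simp only [hFdef, Finset.mem_insert, Finset.mem_image]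
      constructor
      · rintro (h | ⟨z, hz, hzx⟩)
        · omega
        · have : z = x := by omega
          rwa [← this]
      · intro hx
        exact Or.inr ⟨x, hx, rfl⟩
    · -- asymorphism estimates
      intro H
      refine ⟨(H.image (fun x => x - (n+1))) ∪ insert n (H.image (fun x => x + (n+1))),
        ?_, ?_⟩
      · intro F hF F' hF' hball x hx
        obtain ⟨_, hsub1, hsub2⟩ := hball
        apply Finset.mem_union_left
        rcases Finset.mem_symmDiff.1 hx with ⟨h1, h2⟩ | ⟨h1, h2⟩
        · have hy : x + (n+1) ∈ F' := (mem_hmap hF').1 h1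
          have hyn : x + (n+1) ∉ F := fun hc => h2 ((mem_hmap hF).2 hc)
          have : x + (n+1) ∈ F ∪ H := BFset_subset F H (hsub1 hy)
          have hH : x + (n+1) ∈ H := (Finset.mem_union.1 this).resolve_left hyn
          exact Finset.mem_image.2 ⟨x + (n+1), hH, by omega⟩
        · have hy : x + (n+1) ∈ F := (mem_hmap hF).1 h1
          have hyn : x + (n+1) ∉ F' := fun hc => h2 ((mem_hmap hF').2 hc)
          have : x + (n+1) ∈ F' ∪ H := BFset_subset F' H (hsub2 hy)
          have hH : x + (n+1) ∈ H := (Finset.mem_union.1 this).resolve_left hyn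
          exact Finset.mem_image.2 ⟨x + (n+1), hH, by omega⟩
      · intro F hF F' hF' hsd
        have hnH' : n ∈ (H.image (fun x => x - (n+1))) ∪ insert n (H.image (fun x => x + (n+1))) :=
          Finset.mem_union_right _ (Finset.mem_insert_self _ _)
        have key : ∀ y, y ∈ F' → y ∉ F →
            y ∈ (H.image (fun x => x - (n+1))) ∪ insert n (H.image (fun x => x + (n+1))) := by
          intro y hy hyn
          have hne : y ≠ n := fun hc => hyn (hc ▸ mem_of_MM hF)
          have hle := le_of_MM hF' hy
          have h1 : y - (n+1) ∈ hmap n F' := (mem_hmap hF').2 (by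
            have : y - (n+1) + (n+1) = y := by omega
            rwa [this])
          have h2 : y - (n+1) ∉ hmap n F := by
            intro hc
            have := (mem_hmap hF).1 hc
            have hy2 : y - (n+1) + (n+1) = y := by omega
            rw [hy2] at this
            exact hyn this
          have hH : y - (n+1) ∈ H := hsd (Finset.mem_symmDiff.2 (Or.inl ⟨h1, h2⟩))
          exact Finset.mem_union_right _ (Finset.mem_insert.2 (Or.inr
            (Finset.mem_image.2 ⟨y - (n+1), hH, by omega⟩)))
        have key' : ∀ y, y ∈ F → y ∉ F' →
            y ∈ (H.image (fun x => x - (n+1))) ∪ insert n (H.image (fun x => x + (n+1))) := by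
          intro y hy hyn
          have hne : y ≠ n := fun hc => hyn (hc ▸ mem_of_MM hF')
          have hle := le_of_MM hF hy
          have h1 : y - (n+1) ∈ hmap n F := (mem_hmap hF).2 (by
            have : y - (n+1) + (n+1) = y := by omega
            rwa [this])
          have h2 : y - (n+1) ∉ hmap n F' := by
            intro hc
            have := (mem_hmap hF').1 hc
            have hy2 : y - (n+1) + (n+1) = y := by omega
            rw [hy2] at this
            exact hyn this
          have hH : y - (n+1) ∈ H := hsd (Finset.mem_symmDiff.2 (Or.inr ⟨h1, h2⟩))
          exact Finset.mem_union_right _ (Finset.mem_insert.2 (Or.inr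
            (Finset.mem_image.2 ⟨y - (n+1), hH, by omega⟩)))
        refine ⟨⟨n, mem_of_MM hF'⟩, ?_, ?_⟩
        · rw [BFset_eq (mem_of_MM hF) hnH']
          intro y hy
          by_cases h : y ∈ F
          · exact Finset.mem_union_left _ h
          · exact Finset.mem_union_right _ (key y hy h)
        · rw [BFset_eq (mem_of_MM hF') hnH']
          intro y hy
          by_cases h : y ∈ F'
          · exact Finset.mem_union_left _ h
          · exact Finset.mem_union_right _ (key' y hy h)
end

section
/- For each n ∈ ℕ let M_n = {F : F a nonempty finite subset of ℕ with min F = n}. Then any two of the sets M_i, M_j are close in F_ω^♭: setting m = max{i,j} and I_m = {0,1,…,m}, one has M_i ⊆ B^♭(M_j, I_m) and M_j ⊆ B^♭(M_i, I_m), i.e. for every F ∈ M_i there is G ∈ M_j with F ∈ B^♭(G, I_m), and vice versa. -/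
lemma key (i j m : ℕ) (hi : i ≤ m) (hj : j ≤ m) (F : Finset ℕ)
    (hF : F.min = (i : WithTop ℕ)) :
    ∃ G ∈ MM j, F ∈ hyperballF G (Finset.range (m + 1)) := by
  have hiF : i ∈ F := Finset.mem_of_min hF
  have hFne : F.Nonempty := ⟨i, hiF⟩
  set I := Finset.range (m + 1) with hI
  set G := (F \ I) ∪ {j} with hG
  have hjG : j ∈ G := by simp [hG]
  have hjI : j ∈ I := Finset.mem_range.mpr (Nat.lt_succ_of_le hj)
  have hiI : i ∈ I := Finset.mem_range.mpr (Nat.lt_succ_of_le hi)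
  have hminG : G.min = (j : WithTop ℕ) := by
    apply le_antisymm
    · exact Finset.min_le hjG
    · apply Finset.le_min
      intro b hb
      rcases Finset.mem_union.mp hb with hb | hb
      · have := Finset.mem_sdiff.mp hb
        have hbI : ¬ b < m + 1 := by simpa [hI, Finset.mem_range] using this.2
        exact WithTop.coe_le_coe.mpr <| le_trans hj (le_of_lt (Nat.lt_of_succ_le (not_lt.mp hbI)))
      · simp_all
  refine ⟨G, hminG, hFne, ?_, ?_⟩
  · have hGI : (G ∩ I).Nonempty := ⟨j, Finset.mem_inter.mpr ⟨hjG, hjI⟩⟩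
    rw [BFset, if_pos hGI]
    intro x hx
    by_cases hxI : x ∈ I
    · exact Finset.mem_union_right _ hxI
    · exact Finset.mem_union_left _ (Finset.mem_union_left _ (Finset.mem_sdiff.mpr ⟨hx, hxI⟩))
  · have hFI : (F ∩ I).Nonempty := ⟨i, Finset.mem_inter.mpr ⟨hiF, hiI⟩⟩
    rw [BFset, if_pos hFI]
    intro x hx
    rcases Finset.mem_union.mp hx with hx | hx
    · exact Finset.mem_union_left _ (Finset.mem_sdiff.mp hx).1
    · exact Finset.mem_union_right _ (by simp_all)

/-- Theorem 2(iii): any two of the sets `M_i`, `M_j` are close in `F_ω^♭`: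
with `m = max i j` and `I_m = {0,1,…,m}`, we have `M_i ⊆ B^♭(M_j, I_m)` and
`M_j ⊆ B^♭(M_i, I_m)`. -/
theorem Mi_Mj_close (i j : ℕ) :
    (∀ F ∈ MM i, ∃ G ∈ MM j, F ∈ hyperballF G (Finset.range (max i j + 1))) ∧
    (∀ G ∈ MM j, ∃ F ∈ MM i, G ∈ hyperballF F (Finset.range (max i j + 1))) := by
  constructor
  · exact fun F hF => key i j (max i j) (le_max_left i j) (le_max_right i j) F hF
  · exact fun G hG => key j i (max i j) (le_max_right i j) (le_max_left i j) G hG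
end

section
/- The hyperballean F_ω^♭ is not coarsely equivalent to the Cantor macrocube Q_ω: there do not exist a large subset Y of the support of F_ω^♭, a large subset Y' of the support of Q_ω, and a bijection f : Y → Y' such that both f and f⁻¹ are coarse with respect to the subballean structures (for every finite H ⊆ ℕ there is a finite H' ⊆ ℕ with: F' ∈ B^♭(F,H) ∩ Y ⟹ f(F') Δ f(F) ⊆ H' for all F, F' ∈ Y, and K' Δ K ⊆ H with K, K' ∈ Y' ⟹ f⁻¹(K') ∈ B^♭(f⁻¹(K), H')). -/
/-- If `H ∩ F = ∅` then `B_F(H,F) = H`. -/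
lemma BFset_of_disjoint {H F : Finset ℕ} (h : H ∩ F = ∅) : BFset H F = H := by
  simp [BFset, h]

/-- Theorem 2(iii), last part: `F_ω^♭` is not coarsely equivalent to the
Cantor macrocube `Q_ω` (encoded as the finite subsets of `ℕ` with balls given
by symmetric difference): there are no large subsets `Y` of the support of
`F_ω^♭` and `Y'` of the support of `Q_ω` and a bijection `f : Y → Y'`
(with inverse `g`) such that `f` and `g` are coarse. -/
theorem hyperballean_not_coarsely_equivalent_to_macrocube :
    ¬ ∃ (Y Y' : Set (Finset ℕ)) (f g : Finset ℕ → Finset ℕ),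
      (∀ F ∈ Y, F.Nonempty) ∧
      -- Y is large in F_ω^♭
      (∃ α : Finset ℕ, ∀ H : Finset ℕ, H.Nonempty → ∃ F ∈ Y, H ∈ hyperballF F α) ∧
      -- Y' is large in Q_ω
      (∃ α : Finset ℕ, ∀ K : Finset ℕ, ∃ L ∈ Y', symmDiff K L ⊆ α) ∧
      -- f : Y → Y' is a bijection with inverse g
      Set.BijOn f Y Y' ∧ (∀ F ∈ Y, g (f F) = F) ∧ (∀ K ∈ Y', f (g K) = K) ∧
      -- f is coarse
      (∀ H : Finset ℕ, ∃ H' : Finset ℕ, ∀ F ∈ Y, ∀ F' ∈ Y,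
        F' ∈ hyperballF F H → symmDiff (f F') (f F) ⊆ H') ∧
      -- g is coarse
      (∀ H : Finset ℕ, ∃ H' : Finset ℕ, ∀ K ∈ Y', ∀ K' ∈ Y',
        symmDiff K' K ⊆ H → g K' ∈ hyperballF (g K) H') := by
  rintro ⟨Y, Y', f, g, hYne, ⟨α, hYlarge⟩, ⟨β, hY'large⟩, hbij, hgf, hfg, -, hgcoarse⟩
  -- pick n₀ outside β
  obtain ⟨n₀, hn₀⟩ := Infinite.exists_notMem_finset β
  -- coarseness of g at radius insert n₀ β
  obtain ⟨H', hH'⟩ := hgcoarse (insert n₀ β)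
  -- pick m outside α ∪ H'
  obtain ⟨m, hm⟩ := Infinite.exists_notMem_finset (α ∪ H')
  have hmα : m ∉ α := fun h => hm (Finset.mem_union_left _ h)
  have hmH' : m ∉ H' := fun h => hm (Finset.mem_union_right _ h)
  -- {m} ∈ Y
  have hmY : ({m} : Finset ℕ) ∈ Y := by
    obtain ⟨F, hF, hne, hsub, hsup⟩ := hYlarge {m} (Finset.singleton_nonempty m)
    have hdisj : ({m} : Finset ℕ) ∩ α = ∅ := by
      ext x; simp; rintro rfl; exact hmα
    rw [BFset_of_disjoint hdisj] at hsup
    have : F = {m} := by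
      obtain ⟨x, hx⟩ := hYne F hF
      have hxm := hsup hx
      simp only [Finset.mem_singleton] at hxm
      subst hxm
      exact Finset.Subset.antisymm hsup (Finset.singleton_subset_iff.mpr hx)
    rwa [← this]
  set K := f {m} with hK
  have hKY' : K ∈ Y' := hbij.mapsTo hmY
  -- find L ∈ Y' close to K Δ {n₀}
  obtain ⟨L, hLY', hLd⟩ := hY'large (symmDiff K {n₀})
  -- n₀ witnesses L ≠ K
  have hn₀LK : n₀ ∈ symmDiff L K := by
    have h1 : n₀ ∉ symmDiff (symmDiff K {n₀}) L := fun h => hn₀ (hLd h)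
    simp [Finset.mem_symmDiff] at h1 ⊢
    tauto
  have hLneK : L ≠ K := by
    intro h; rw [h] at hn₀LK
    simp [Finset.mem_symmDiff] at hn₀LK
  -- L is close to K: symmDiff L K ⊆ insert n₀ β
  have hsubLK : symmDiff L K ⊆ insert n₀ β := by
    intro x hx
    rcases eq_or_ne x n₀ with rfl | hxn
    · exact Finset.mem_insert_self _ _
    · refine Finset.mem_insert_of_mem (hLd ?_)
      simp [Finset.mem_symmDiff] at hx ⊢
      tauto
  -- apply coarseness of g
  have hball := hH' K hKY' L hLY' hsubLK
  rw [hgf {m} hmY] at hball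
  obtain ⟨hgLne, hgLsub, -⟩ := hball
  have hdisj : ({m} : Finset ℕ) ∩ H' = ∅ := by
    ext x; simp; rintro rfl; exact hmH'
  rw [BFset_of_disjoint hdisj] at hgLsub
  -- g L ⊆ {m} and nonempty, so g L = {m}
  have hgL : g L = {m} := by
    obtain ⟨x, hx⟩ := hgLne
    have hx' := hgLsub hx
    simp at hx'
    subst hx'
    exact Finset.Subset.antisymm hgLsub (Finset.singleton_subset_iff.mpr hx)
  have : L = K := by
    have := hfg L hLY'
    rw [hgL] at this
    rw [← this, hK]
  exact hLneK this
end
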